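/- Let (s_n), (c_n) be sequences of nonnegative reals and (a_n) ⊆ [0,1] with s_{n+1} ≤ (1 − a_n)s_n + c_n for all n. Suppose L ∈ ℕ* bounds (s_n), ∑ c_n converges with Cauchy modulus χ, and ∑ a_n diverges with rate of divergence θ (i.e., ∑_{i=0}^{θ(n)} a_i ≥ n for all n). Then lim s_n = 0 with rate of convergence Σ(k) = θ(χ(2k+1) + 1 + ⌈ln(2L(k+1))⌉) + 1. -/

import Mathlib

/-!
Unrolling the recursion from `N = χ(2k+1) + 1` to `n` gives
`s n ≤ (∏_{N ≤ i < n} (1 - a i)) s N + ∑_{N ≤ i < n} c i`.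
The Cauchy modulus bounds the second term by `1 / (2(k+1))`. For the first, `1 - a ≤ exp (-a)`
bounds the product by `exp (-∑_{N ≤ i < n} a i)`, and since `a i ≤ 1` the rate of divergence
forces `∑_{N ≤ i < n} a i ≥ ⌈log (2L(k+1))⌉`, so the first term is at most
`L / (2L(k+1)) = 1 / (2(k+1))`.
-/

open Finset Real

theorem le_prod_one_sub_mul_add_sum_Ico {s a c : ℕ → ℝ}
    (ha : ∀ n, a n ∈ Set.Icc (0 : ℝ) 1) (hc : ∀ n, 0 ≤ c n)
    (hrec : ∀ n, s (n + 1) ≤ (1 - a n) * s n + c n) {N n : ℕ} (hNn : N ≤ n) :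
    s n ≤ (∏ i ∈ Ico N n, (1 - a i)) * s N + ∑ i ∈ Ico N n, c i := by
  induction n, hNn using Nat.le_induction with
  | base => simp
  | succ p hp ih =>
    obtain ⟨ha0, ha1⟩ := ha p
    have hsum : 0 ≤ ∑ i ∈ Ico N p, c i := sum_nonneg fun i _ => hc i
    rw [prod_Ico_succ_top hp, sum_Ico_succ_top hp]
    calc s (p + 1) ≤ (1 - a p) * s p + c p := hrec p
      _ ≤ (1 - a p) * ((∏ i ∈ Ico N p, (1 - a i)) * s N + ∑ i ∈ Ico N p, c i) + c p := by
        gcongr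
      _ ≤ _ := by nlinarith [mul_nonneg ha0 hsum]

theorem prod_one_sub_le_exp_neg_sum {ι : Type*} (t : Finset ι) {a : ι → ℝ}
    (ha : ∀ i ∈ t, a i ≤ 1) : ∏ i ∈ t, (1 - a i) ≤ exp (-∑ i ∈ t, a i) := by
  rw [← sum_neg_distrib, exp_sum]
  exact prod_le_prod (fun i hi => by linarith [ha i hi]) fun i _ => one_sub_le_exp_neg (a i)

theorem le_of_le_sum_range {a : ℕ → ℝ} (ha : ∀ n, a n ≤ 1) {m q : ℕ}
    (h : (m : ℝ) ≤ ∑ i ∈ range q, a i) : m ≤ q := by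
  have : ∑ i ∈ range q, a i ≤ q := by
    simpa using sum_le_sum fun i (_ : i ∈ range q) => ha i
  exact_mod_cast h.trans this

theorem le_sum_Ico_of_add_le_sum_range {a : ℕ → ℝ} (ha : ∀ n, a n ∈ Set.Icc (0 : ℝ) 1)
    {N M q n : ℕ} (hq : ((N + M : ℕ) : ℝ) ≤ ∑ i ∈ range q, a i) (hqn : q ≤ n) :
    N ≤ n ∧ (M : ℝ) ≤ ∑ i ∈ Ico N n, a i := by
  have hNn : N ≤ n :=
    (Nat.le_add_right N M).trans ((le_of_le_sum_range (fun i => (ha i).2) hq).trans hqn)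
  have hmono : ∑ i ∈ range q, a i ≤ ∑ i ∈ range n, a i :=
    sum_le_sum_of_subset_of_nonneg (range_subset_range.2 hqn) fun i _ _ => (ha i).1
  have hN : ∑ i ∈ range N, a i ≤ N := by
    simpa using sum_le_sum fun i (_ : i ∈ range N) => (ha i).2
  refine ⟨hNn, ?_⟩
  rw [← sum_range_add_sum_Ico _ hNn] at hmono
  push_cast at hq
  linarith

theorem sum_Ico_le_of_cauchy_modulus {c : ℕ → ℝ} {χ : ℕ → ℕ}
    (hχ : ∀ k n, χ k ≤ n → ∀ l : ℕ, 1 ≤ l →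
      ∑ i ∈ Icc (n + 1) (n + l), c i ≤ 1 / (k + 1))
    (k n : ℕ) : ∑ i ∈ Ico (χ k + 1) n, c i ≤ 1 / (k + 1) := by
  rcases le_or_gt n (χ k + 1) with hn | hn
  · rw [Ico_eq_empty_of_le hn, sum_empty]
    positivity
  · have hIco : Ico (χ k + 1) n = Icc (χ k + 1) (χ k + (n - 1 - χ k)) := by
      ext i; simp only [mem_Ico, mem_Icc]; omega
    rw [hIco]
    exact hχ k (χ k) le_rfl _ (by omega)

theorem exp_neg_ceil_log_mul_le {L r : ℝ} (hL : 0 ≤ L) (hr : 0 < r) :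
    exp (-⌈log (L * r)⌉₊) * L ≤ r⁻¹ := by
  rcases hL.eq_or_lt with rfl | hL
  · simpa using hr.le
  have hLr : 0 < L * r := mul_pos hL hr
  calc exp (-⌈log (L * r)⌉₊) * L ≤ exp (-log (L * r)) * L := by
        gcongr; exact Nat.le_ceil _
    _ = r⁻¹ := by rw [exp_neg, exp_log hLr]; field_simp

theorem stmt_12_general (s c : ℕ → ℝ) (hc : ∀ n, 0 ≤ c n)
    (a : ℕ → ℝ) (ha : ∀ n, a n ∈ Set.Icc (0:ℝ) 1)
    (hrec : ∀ n, s (n + 1) ≤ (1 - a n) * s n + c n)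
    (L : ℕ) (hLb : ∀ n, s n ≤ L)
    (χ : ℕ → ℕ)
    (hχ : ∀ k n, χ k ≤ n → ∀ l : ℕ, 1 ≤ l →
      ∑ i ∈ Finset.Icc (n + 1) (n + l), c i ≤ 1 / (k + 1))
    (θ : ℕ → ℕ)
    (hθ : ∀ n : ℕ, (n : ℝ) ≤ ∑ i ∈ Finset.range (θ n + 1), a i) :
    ∀ k n, θ (χ (2 * k + 1) + 1 + ⌈Real.log (2 * L * (k + 1))⌉₊) + 1 ≤ n →
      s n ≤ 1 / (k + 1) := by
  intro k n hn
  set N := χ (2 * k + 1) + 1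
  set M := ⌈log (2 * L * (k + 1))⌉₊
  obtain ⟨hNn, hMa⟩ := le_sum_Ico_of_add_le_sum_range ha (hθ (N + M)) hn
  have hprod_nonneg : 0 ≤ ∏ i ∈ Ico N n, (1 - a i) :=
    prod_nonneg fun i _ => by linarith [(ha i).2]
  have hprod : ∏ i ∈ Ico N n, (1 - a i) ≤ exp (-M) :=
    (prod_one_sub_le_exp_neg_sum _ fun i _ => (ha i).2).trans (exp_le_exp.2 (neg_le_neg hMa))
  have hdecay : (∏ i ∈ Ico N n, (1 - a i)) * s N ≤ (2 * ((k : ℝ) + 1))⁻¹ := by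
    have h := exp_neg_ceil_log_mul_le (L.cast_nonneg : (0 : ℝ) ≤ L)
      (by positivity : (0 : ℝ) < 2 * (k + 1))
    rw [← mul_assoc, mul_comm (L : ℝ) 2] at h
    calc (∏ i ∈ Ico N n, (1 - a i)) * s N ≤ (∏ i ∈ Ico N n, (1 - a i)) * L :=
          mul_le_mul_of_nonneg_left (hLb N) hprod_nonneg
      _ ≤ exp (-M) * L := mul_le_mul_of_nonneg_right hprod L.cast_nonneg
      _ ≤ _ := h
  have htail : ∑ i ∈ Ico N n, c i ≤ 1 / ((2 * k + 1 : ℕ) + 1) :=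
    sum_Ico_le_of_cauchy_modulus hχ (2 * k + 1) n
  calc s n ≤ (∏ i ∈ Ico N n, (1 - a i)) * s N + ∑ i ∈ Ico N n, c i :=
        le_prod_one_sub_mul_add_sum_Ico ha hc hrec hNn
    _ ≤ (2 * ((k : ℝ) + 1))⁻¹ + (2 * ((k : ℝ) + 1))⁻¹ := by
        refine add_le_add hdecay (htail.trans_eq ?_)
        push_cast; ring
    _ = 1 / (k + 1) := by field_simp; ring

theorem stmt_12 (s c : ℕ → ℝ) (hs : ∀ n, 0 ≤ s n) (hc : ∀ n, 0 ≤ c n)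
    (a : ℕ → ℝ) (ha : ∀ n, a n ∈ Set.Icc (0:ℝ) 1)
    (hrec : ∀ n, s (n + 1) ≤ (1 - a n) * s n + c n)
    (L : ℕ) (hL : 1 ≤ L) (hLb : ∀ n, s n ≤ L)
    (hcsum : Summable c)
    (χ : ℕ → ℕ)
    (hχ : ∀ k n, χ k ≤ n → ∀ l : ℕ, 1 ≤ l →
      ∑ i ∈ Finset.Icc (n + 1) (n + l), c i ≤ 1 / (k + 1))
    (θ : ℕ → ℕ)
    (hθ : ∀ n : ℕ, (n : ℝ) ≤ ∑ i ∈ Finset.range (θ n + 1), a i) :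
    ∀ k n, θ (χ (2 * k + 1) + 1 + ⌈Real.log (2 * L * (k + 1))⌉₊) + 1 ≤ n →
      s n ≤ 1 / (k + 1) :=
  stmt_12_general s c hc a ha hrec L hLb χ hχ θ hθ
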